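/- Let each f_i be μ_i-strongly convex and L_i-smooth. The iterates of SGD with DecSPS (c_k = √(k+1), c_{-1} = c_0) satisfy ‖x^k − x*‖² ≤ D²_max almost surely for all k, where D²_max = max{ ‖x^0 − x*‖², 2 c_0 γ_b σ̂²_{B,max} / min{μ_min/(2L_max), μ_min γ_b} }, with σ̂²_{B,max} = max over batches S of size B of (f_S(x*) − ℓ_S*). -/

import Mathlib

open InnerProductSpace RealInnerProductSpace

lemma descent_lemma {E : Type*} [NormedAddCommGroup E] [InnerProductSpace ℝ E] [CompleteSpace E]
    {f : E → ℝ} {g : E → E} (hg : ∀ z, HasGradientAt f (g z) z)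
    {K : ℝ} (hLip : ∀ z w, ‖g z - g w‖ ≤ K * ‖z - w‖)
    (x y : E) : f y ≤ f x + ⟪g x, y - x⟫ + K / 2 * ‖y - x‖ ^ 2 := by
  set v := y - x with hv
  set φ : ℝ → ℝ := fun t => f (x + t • v) - t * ⟪g x, v⟫ - K / 2 * t ^ 2 * ‖v‖ ^ 2 with hφ
  have hφd : ∀ t : ℝ, HasDerivAt φ
      (⟪g (x + t • v), v⟫ - ⟪g x, v⟫ - K * t * ‖v‖ ^ 2) t := by
    intro t
    have h1 : HasDerivAt (fun t : ℝ => x + t • v) v t := by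
      simpa using ((hasDerivAt_id t).smul_const v).const_add x
    have h2 : HasDerivAt (fun t : ℝ => f (x + t • v)) ⟪g (x + t • v), v⟫ t := by
      have := ((hg (x + t • v)).hasFDerivAt).comp_hasDerivAt t h1
      simpa [InnerProductSpace.toDual_apply_apply, Function.comp_def] using this
    have h3 : HasDerivAt (fun t : ℝ => t * ⟪g x, v⟫) ⟪g x, v⟫ t := by
      simpa using (hasDerivAt_id t).mul_const ⟪g x, v⟫
    have h4 : HasDerivAt (fun t : ℝ => K / 2 * t ^ 2 * ‖v‖ ^ 2) (K * t * ‖v‖ ^ 2) t := by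
      have := ((hasDerivAt_pow 2 t).const_mul (K / 2)).mul_const (‖v‖ ^ 2)
      refine this.congr_deriv ?_
      ring
    exact (h2.sub h3).sub h4
  have hanti : AntitoneOn φ (Set.Icc (0:ℝ) 1) := by
    apply antitoneOn_of_deriv_nonpos (convex_Icc 0 1)
    · exact fun t _ => ((hφd t).differentiableAt).continuousAt.continuousWithinAt
    · exact fun t _ => ((hφd t).differentiableAt).differentiableWithinAt
    · intro t ht
      rw [interior_Icc] at ht
      rw [(hφd t).deriv]
      have h5 : ⟪g (x + t • v), v⟫ - ⟪g x, v⟫ ≤ K * t * ‖v‖ ^ 2 := by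
        rw [← inner_sub_left]
        calc ⟪g (x + t • v) - g x, v⟫ ≤ ‖g (x + t • v) - g x‖ * ‖v‖ := real_inner_le_norm _ _
        _ ≤ (K * ‖x + t • v - x‖) * ‖v‖ := by
            have := hLip (x + t • v) x
            nlinarith [norm_nonneg v]
        _ = K * t * ‖v‖ ^ 2 := by
            rw [show x + t • v - x = t • v by abel, norm_smul]
            simp only [Real.norm_eq_abs, abs_of_pos ht.1]
            ring
      linarith
  have h01 := hanti (Set.mem_Icc.mpr ⟨le_refl 0, zero_le_one⟩)
      (Set.mem_Icc.mpr ⟨zero_le_one, le_refl 1⟩) zero_le_one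
  have hφ0 : φ 0 = f x := by simp [hφ]
  have hφ1 : φ 1 = f y - ⟪g x, v⟫ - K / 2 * ‖v‖ ^ 2 := by
    simp [hφ, hv]
  rw [hφ0, hφ1] at h01
  linarith


/-- The type of minibatches of size `B` over `n` datapoints. -/
abbrev Batch (n B : ℕ) := {S : Finset (Fin n) // S.card = B}

set_option maxHeartbeats 2000000 in
/-- Almost-sure boundedness of DecSPS iterates under strong convexity: with each
`fᵢ` `μᵢ`-strongly convex and `Lᵢ`-smooth, `c_k = √(k+1)`, DecSPS stepsizes, and
any batch sequence `S_k`, the iterates satisfy `‖x^k − x*‖² ≤ D²_max` for all `k`,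
where `D²_max = max{‖x⁰ − x*‖², 2c₀γ_b σ̂²_{B,max}/min{μ_min/(2L_max), μ_min γ_b}}`
and `σ̂²_{B,max} = max_S (f_S(x*) − ℓ*_S)`. -/
theorem stmt13 {d n B : ℕ} (hn : 0 < n) [Nonempty (Batch n B)]
    (f : Fin n → EuclideanSpace ℝ (Fin d) → ℝ)
    (Gf : Fin n → EuclideanSpace ℝ (Fin d) → EuclideanSpace ℝ (Fin d))
    (μ L : Fin n → ℝ) (hμpos : ∀ i, 0 < μ i)
    (hgrad : ∀ i x, HasGradientAt (f i) (Gf i x) x)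
    (hsc : ∀ i x y, f i x ≥ f i y + inner ℝ (Gf i y) (x - y) + μ i / 2 * ‖x - y‖ ^ 2)
    (hsmooth : ∀ i x y, ‖Gf i x - Gf i y‖ ≤ L i * ‖x - y‖)
    (μmin Lmax : ℝ) (hμm : μmin = ⨅ i, μ i) (hLm : Lmax = ⨆ i, L i)
    -- minibatch functions and gradients
    (fS : Batch n B → EuclideanSpace ℝ (Fin d) → ℝ)
    (GS : Batch n B → EuclideanSpace ℝ (Fin d) → EuclideanSpace ℝ (Fin d))
    (hfS : ∀ S x, fS S x = (∑ i ∈ S.1, f i x) / B)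
    (hGS : ∀ S x, GS S x = (B : ℝ)⁻¹ • ∑ i ∈ S.1, Gf i x)
    (l : Batch n B → ℝ) (hl : ∀ S x, l S ≤ fS S x)
    -- stepsize parameters: c_k = √(k+1)
    (c : ℕ → ℝ) (hc : ∀ k : ℕ, c k = Real.sqrt (k + 1))
    (γb : ℝ) (hγb : 0 < γb)
    -- objective and minimizer
    (Fobj : EuclideanSpace ℝ (Fin d) → ℝ) (hF : ∀ x, Fobj x = (∑ i, f i x) / n)
    (xstar : EuclideanSpace ℝ (Fin d)) (hxstar : ∀ x, Fobj xstar ≤ Fobj x)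
    -- arbitrary batch sequence (so the bound holds surely, hence almost surely)
    (Sk : ℕ → Batch n B)
    -- iterates and DecSPS stepsizes
    (x : ℕ → EuclideanSpace ℝ (Fin d)) (γ : ℕ → ℝ)
    (hgz : ∀ k, GS (Sk k) (x k) ≠ 0)
    (hγ0 : γ 0 = (1 / c 0) *
      min ((fS (Sk 0) (x 0) - l (Sk 0)) / ‖GS (Sk 0) (x 0)‖ ^ 2) (c 0 * γb))
    (hγrec : ∀ k, γ (k + 1) = (1 / c (k + 1)) *
      min ((fS (Sk (k + 1)) (x (k + 1)) - l (Sk (k + 1))) / ‖GS (Sk (k + 1)) (x (k + 1))‖ ^ 2)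
        (c k * γ k))
    (hxrec : ∀ k, x (k + 1) = x k - γ k • GS (Sk k) (x k))
    -- maximal suboptimality over batches
    (σmax : ℝ) (hσmax : σmax = ⨆ S : Batch n B, (fS S xstar - l S)) :
    ∀ k, ‖x k - xstar‖ ^ 2 ≤
      max (‖x 0 - xstar‖ ^ 2)
        (2 * c 0 * γb * σmax / min (μmin / (2 * Lmax)) (μmin * γb)) := by
  -- basic facts about c
  have hc0 : c 0 = 1 := by rw [hc]; norm_num
  have hck1 : ∀ k, 1 ≤ c k := by
    intro k
    rw [hc]
    have h1 : (1:ℝ) ≤ (k:ℝ) + 1 := by linarith [Nat.cast_nonneg (α := ℝ) k]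
    calc (1:ℝ) = Real.sqrt 1 := by simp
    _ ≤ Real.sqrt ((k:ℝ) + 1) := Real.sqrt_le_sqrt h1
  have hckpos : ∀ k, 0 < c k := fun k => lt_of_lt_of_le one_pos (hck1 k)
  -- B positive
  have hB : 0 < B := by
    rcases Nat.eq_zero_or_pos B with h | h
    · exfalso
      apply hgz 0
      rw [hGS]
      have hS : (Sk 0).1 = ∅ := Finset.card_eq_zero.mp (by rw [(Sk 0).2, h])
      rw [hS]
      simp
    · exact h
  have hBpos : (0:ℝ) < B := by exact_mod_cast hB
  -- μ, L facts
  have : Nonempty (Fin n) := ⟨⟨0, hn⟩⟩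
  have hμle : ∀ i, μmin ≤ μ i := by
    intro i; rw [hμm]
    exact ciInf_le (Set.Finite.bddBelow (Set.finite_range μ)) i
  have hμ0 : 0 < μmin := by
    obtain ⟨i0, hi0⟩ := Finite.exists_min μ
    rw [hμm]
    exact lt_of_lt_of_le (hμpos i0) (le_ciInf hi0)
  have hLle : ∀ i, L i ≤ Lmax := by
    intro i; rw [hLm]
    exact le_ciSup (Set.Finite.bddAbove (Set.finite_range L)) i
  -- handle d = 0
  rcases Nat.eq_zero_or_pos d with hd | hd
  · subst hd
    have hsub : ∀ z w : EuclideanSpace ℝ (Fin 0), z = w := by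
      intro z w; ext i; exact i.elim0
    intro k
    rw [hsub (x k) (x 0)]
    exact le_max_left _ _
  -- μmin ≤ Lmax
  have hμL : μmin ≤ Lmax := by
    set v : EuclideanSpace ℝ (Fin d) := EuclideanSpace.single ⟨0, hd⟩ (1:ℝ) with hvdef
    have hvn : ‖v‖ = 1 := by rw [hvdef, EuclideanSpace.norm_single]; simp
    have key : ∀ i, μ i ≤ L i := by
      intro i
      have h1 := hsc i v 0
      have h2 := hsc i 0 v
      have h3 := hsmooth i v 0
      simp only [sub_zero, zero_sub, inner_neg_right, norm_neg] at h1 h2 h3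
      have hin : ⟪Gf i v - Gf i 0, v⟫ ≤ ‖Gf i v - Gf i 0‖ * ‖v‖ := real_inner_le_norm _ _
      rw [inner_sub_left] at hin
      rw [hvn] at h1 h2 hin h3
      nlinarith
    exact le_trans (hμle ⟨0, hn⟩) (le_trans (key ⟨0, hn⟩) (hLle ⟨0, hn⟩))
  have hL0 : 0 < Lmax := lt_of_lt_of_le hμ0 hμL
  -- σmax facts
  have hσle : ∀ S, fS S xstar - l S ≤ σmax := by
    intro S; rw [hσmax]
    exact le_ciSup (f := fun S : Batch n B => fS S xstar - l S)
      (Set.Finite.bddAbove (Set.finite_range _)) S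
  have hσ0 : 0 ≤ σmax := by
    obtain ⟨S0⟩ := ‹Nonempty (Batch n B)›
    exact le_trans (sub_nonneg.mpr (hl S0 xstar)) (hσle S0)
  -- constants
  set m : ℝ := min (1 / (2 * Lmax)) γb with hmdef
  have hm0 : 0 < m := lt_min (by positivity) hγb
  set a : ℝ := μmin * m with hadef
  have ha0 : 0 < a := mul_pos hμ0 hm0
  have ha1 : a ≤ 1 := by
    have h1 : m ≤ 1 / (2 * Lmax) := min_le_left _ _
    have h2 : a ≤ μmin * (1 / (2 * Lmax)) := mul_le_mul_of_nonneg_left h1 (le_of_lt hμ0)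
    have h3 : μmin * (1 / (2 * Lmax)) ≤ 1 / 2 := by
      rw [mul_one_div, div_le_div_iff₀ (by positivity) (by norm_num)]
      linarith
    linarith
  have haeq : min (μmin / (2 * Lmax)) (μmin * γb) = a := by
    rw [hadef, hmdef, mul_min_of_nonneg _ _ (le_of_lt hμ0), mul_one_div]
  -- strong convexity of fS
  have hscS : ∀ (S : Batch n B) (p q : EuclideanSpace ℝ (Fin d)),
      fS S p ≥ fS S q + ⟪GS S q, p - q⟫ + μmin / 2 * ‖p - q‖ ^ 2 := by
    intro S p q
    have hsum : ∑ i ∈ S.1, f i q + ⟪∑ i ∈ S.1, Gf i q, p - q⟫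
        + ((∑ i ∈ S.1, μ i) / 2) * ‖p - q‖ ^ 2 ≤ ∑ i ∈ S.1, f i p := by
      rw [sum_inner, Finset.sum_div, Finset.sum_mul, ← Finset.sum_add_distrib,
        ← Finset.sum_add_distrib]
      exact Finset.sum_le_sum (fun i _ => hsc i p q)
    have hμS : (B : ℝ) * μmin ≤ ∑ i ∈ S.1, μ i := by
      calc (B : ℝ) * μmin = ∑ _i ∈ S.1, μmin := by
            rw [Finset.sum_const, S.2, nsmul_eq_mul]
      _ ≤ ∑ i ∈ S.1, μ i := Finset.sum_le_sum (fun i _ => hμle i)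
    rw [ge_iff_le, hfS, hfS, hGS, real_inner_smul_left]
    have hN : (0:ℝ) ≤ ‖p - q‖ ^ 2 := by positivity
    rw [div_add' _ _ _ (ne_of_gt hBpos), div_add' _ _ _ (ne_of_gt hBpos),
      div_le_div_iff_of_pos_right hBpos]
    have hid : (↑B:ℝ)⁻¹ * ⟪∑ i ∈ S.1, Gf i q, p - q⟫ * ↑B = ⟪∑ i ∈ S.1, Gf i q, p - q⟫ := by
      field_simp
    rw [hid]
    have h2 := mul_le_mul_of_nonneg_right hμS hN
    linarith [hsum, h2]
  -- gradient of fS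
  have hgradS : ∀ (S : Batch n B) p, HasGradientAt (fS S) (GS S p) p := by
    intro S p
    rw [hasGradientAt_iff_hasFDerivAt]
    have h1 : HasFDerivAt (fun q => ∑ i ∈ S.1, f i q)
        (∑ i ∈ S.1, toDual ℝ _ (Gf i p)) p :=
      HasFDerivAt.fun_sum (fun i _ => (hgrad i p).hasFDerivAt)
    have h2 : HasFDerivAt (fun q => (∑ i ∈ S.1, f i q) / B)
        ((B:ℝ)⁻¹ • ∑ i ∈ S.1, toDual ℝ _ (Gf i p)) p := by
      simpa [div_eq_inv_mul] using h1.const_mul ((B:ℝ)⁻¹)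
    have hfun : fS S = fun q => (∑ i ∈ S.1, f i q) / B := funext (hfS S)
    rw [hfun, hGS]
    simpa [map_smul, map_sum] using h2
  -- smoothness of GS
  have hsmoothS : ∀ (S : Batch n B) p q, ‖GS S p - GS S q‖ ≤ Lmax * ‖p - q‖ := by
    intro S p q
    rw [hGS, hGS, ← smul_sub, ← Finset.sum_sub_distrib, norm_smul]
    have h1 : ‖∑ i ∈ S.1, (Gf i p - Gf i q)‖ ≤ (B : ℝ) * (Lmax * ‖p - q‖) := by
      calc ‖∑ i ∈ S.1, (Gf i p - Gf i q)‖ ≤ ∑ i ∈ S.1, ‖Gf i p - Gf i q‖ :=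
            norm_sum_le _ _
      _ ≤ ∑ _i ∈ S.1, Lmax * ‖p - q‖ := by
          apply Finset.sum_le_sum
          intro i _
          exact le_trans (hsmooth i p q)
            (mul_le_mul_of_nonneg_right (hLle i) (norm_nonneg _))
      _ = (B : ℝ) * (Lmax * ‖p - q‖) := by rw [Finset.sum_const, S.2, nsmul_eq_mul]
    rw [show ‖(B:ℝ)⁻¹‖ = (B:ℝ)⁻¹ by rw [Real.norm_eq_abs, abs_of_pos (by positivity)]]
    rw [inv_mul_le_iff₀ hBpos]
    linarith
  -- Polyak lower bound
  have hQ : ∀ (S : Batch n B) p, GS S p ≠ 0 →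
      1 / (2 * Lmax) ≤ (fS S p - l S) / ‖GS S p‖ ^ 2 := by
    intro S p hne
    have hNpos : (0:ℝ) < ‖GS S p‖ ^ 2 := by
      have := norm_pos_iff.mpr hne
      positivity
    have hdl := descent_lemma (hgradS S) (hsmoothS S) p (p - Lmax⁻¹ • GS S p)
    have h1 := hl S (p - Lmax⁻¹ • GS S p)
    rw [show p - Lmax⁻¹ • GS S p - p = -(Lmax⁻¹ • GS S p) by abel] at hdl
    rw [inner_neg_right, real_inner_smul_right, real_inner_self_eq_norm_sq,
      norm_neg, norm_smul] at hdl
    rw [show ‖Lmax⁻¹‖ = Lmax⁻¹ by rw [Real.norm_eq_abs, abs_of_pos (by positivity)]] at hdl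
    have hco : -(Lmax⁻¹ * ‖GS S p‖ ^ 2) + Lmax / 2 * (Lmax⁻¹ * ‖GS S p‖) ^ 2
        = -(‖GS S p‖ ^ 2 / (2 * Lmax)) := by
      field_simp
      ring
    have h2 : ‖GS S p‖ ^ 2 / (2 * Lmax) ≤ fS S p - l S := by linarith [hdl, h1, hco]
    rw [div_le_div_iff₀ (by positivity) hNpos]
    have h3 := mul_le_mul_of_nonneg_right h2
      (le_of_lt (show (0:ℝ) < 2 * Lmax by positivity))
    rw [div_mul_cancel₀ _ (show (2 * Lmax : ℝ) ≠ 0 by positivity)] at h3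
    linarith
  -- stepsize bounds
  have hγQ : ∀ k, c k * γ k ≤
      (fS (Sk k) (x k) - l (Sk k)) / ‖GS (Sk k) (x k)‖ ^ 2 := by
    intro k
    cases k with
    | zero =>
      rw [hγ0, ← mul_assoc, mul_one_div, div_self (ne_of_gt (hckpos 0)), one_mul]
      exact min_le_left _ _
    | succ k =>
      rw [hγrec, ← mul_assoc, mul_one_div, div_self (ne_of_gt (hckpos (k+1))), one_mul]
      exact min_le_left _ _
  have hkey : ∀ k, m ≤ c k * γ k ∧ c k * γ k ≤ γb := by
    intro k
    induction k with
    | zero =>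
      rw [hγ0, hc0, ← mul_assoc, mul_one_div, div_self one_ne_zero, one_mul, one_mul]
      constructor
      · exact le_min (le_trans (min_le_left _ _) (hQ (Sk 0) (x 0) (hgz 0))) (min_le_right _ _)
      · exact min_le_right _ _
    | succ k ih =>
      rw [hγrec, ← mul_assoc, mul_one_div, div_self (ne_of_gt (hckpos (k+1))), one_mul]
      constructor
      · exact le_min (le_trans (min_le_left _ _) (hQ (Sk (k+1)) (x (k+1)) (hgz (k+1)))) ih.1
      · exact le_trans (min_le_right _ _) ih.2
  have hγpos : ∀ k, 0 < γ k := by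
    intro k
    by_contra h
    push_neg at h
    have h1 : c k * γ k ≤ 0 := mul_nonpos_of_nonneg_of_nonpos (le_of_lt (hckpos k)) h
    linarith [(hkey k).1, hm0]
  -- one-step inequality
  have hstep : ∀ k, ‖x (k+1) - xstar‖ ^ 2 ≤
      (1 - a / c k) * ‖x k - xstar‖ ^ 2 + (a / c k) * (2 * γb * σmax / a) := by
    intro k
    set S := Sk k with hSdef
    set g : EuclideanSpace ℝ (Fin d) := GS S (x k) with hgdef
    set γk := γ k with hγkdef
    set e : EuclideanSpace ℝ (Fin d) := x k - xstar with hedef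
    have hNpos : (0:ℝ) < ‖g‖ ^ 2 := by
      have := norm_pos_iff.mpr (hgz k)
      positivity
    have hexp : ‖x (k+1) - xstar‖ ^ 2 = ‖e‖ ^ 2 - 2 * γk * ⟪g, e⟫ + γk ^ 2 * ‖g‖ ^ 2 := by
      rw [hxrec k, show x k - γk • g - xstar = e - γk • g by rw [hedef]; abel,
        norm_sub_sq_real, real_inner_smul_right, norm_smul, Real.norm_eq_abs, mul_pow,
        sq_abs, real_inner_comm]
      ring
    have hsc1 := hscS S xstar (x k)
    rw [show xstar - x k = -e by rw [hedef]; abel, inner_neg_right, norm_neg] at hsc1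
    have e1 : fS S (x k) - fS S xstar + μmin / 2 * ‖e‖ ^ 2 ≤ ⟪g, e⟫ := by linarith
    -- γk * ‖g‖² ≤ fS xk − l
    have hγg : γk * ‖g‖ ^ 2 ≤ fS S (x k) - l S := by
      have h1 : c k * γk * ‖g‖ ^ 2 ≤ fS S (x k) - l S := by
        have h2 := mul_le_mul_of_nonneg_right (hγQ k) (le_of_lt hNpos)
        rwa [div_mul_cancel₀ _ (ne_of_gt hNpos)] at h2
      have h3 : 0 ≤ (c k - 1) * γk * ‖g‖ ^ 2 :=
        mul_nonneg (mul_nonneg (sub_nonneg.mpr (hck1 k)) (le_of_lt (hγpos k)))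
          (le_of_lt hNpos)
      nlinarith [h1, h3]
    have e2 : γk ^ 2 * ‖g‖ ^ 2 ≤ γk * (fS S (x k) - l S) := by
      calc γk ^ 2 * ‖g‖ ^ 2 = γk * (γk * ‖g‖ ^ 2) := by ring
      _ ≤ γk * (fS S (x k) - l S) := mul_le_mul_of_nonneg_left hγg (le_of_lt (hγpos k))
    have h5 : l S ≤ fS S (x k) := hl S (x k)
    have e3 : ‖x (k+1) - xstar‖ ^ 2 ≤ (1 - μmin * γk) * ‖e‖ ^ 2 + 2 * γk * σmax := by
      have e1' : 2 * γk * (fS S (x k) - fS S xstar + μmin / 2 * ‖e‖ ^ 2) ≤ 2 * γk * ⟪g, e⟫ :=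
        mul_le_mul_of_nonneg_left e1 (by linarith [hγpos k])
      have h6 : γk * (fS S xstar - l S) ≤ γk * σmax :=
        mul_le_mul_of_nonneg_left (hσle S) (le_of_lt (hγpos k))
      have h7 : 0 ≤ γk * (fS S (x k) - l S) :=
        mul_nonneg (le_of_lt (hγpos k)) (by linarith)
      rw [hexp]
      nlinarith [e1', e2, h6, h7]
    have h8 : a / c k ≤ μmin * γk := by
      rw [div_le_iff₀ (hckpos k)]
      calc a = μmin * m := hadef
      _ ≤ μmin * (c k * γk) := mul_le_mul_of_nonneg_left (hkey k).1 (le_of_lt hμ0)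
      _ = μmin * γk * c k := by ring
    have h9 : γk ≤ γb / c k := by
      rw [le_div_iff₀ (hckpos k)]
      linarith [(hkey k).2, mul_comm (c k) γk]
    have hz0 : (0:ℝ) ≤ ‖e‖ ^ 2 := by positivity
    have e4 : (1 - μmin * γk) * ‖e‖ ^ 2 ≤ (1 - a / c k) * ‖e‖ ^ 2 := by
      nlinarith [mul_nonneg (sub_nonneg.mpr h8) hz0]
    have e5 : 2 * γk * σmax ≤ 2 * (γb / c k) * σmax := by
      nlinarith [mul_le_mul_of_nonneg_right h9 hσ0]
    have e6 : 2 * (γb / c k) * σmax = (a / c k) * (2 * γb * σmax / a) := by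
      have hμne : μmin ≠ 0 := ne_of_gt hμ0
      have hmne : m ≠ 0 := ne_of_gt hm0
      have hcne : c k ≠ 0 := ne_of_gt (hckpos k)
      field_simp
    calc ‖x (k+1) - xstar‖ ^ 2 ≤ (1 - μmin * γk) * ‖e‖ ^ 2 + 2 * γk * σmax := e3
    _ ≤ (1 - a / c k) * ‖e‖ ^ 2 + (a / c k) * (2 * γb * σmax / a) := by
        rw [← e6]; linarith
  -- final induction
  have hR : 2 * c 0 * γb * σmax / min (μmin / (2 * Lmax)) (μmin * γb)
      = 2 * γb * σmax / a := by
    rw [hc0, haeq]; ring_nf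
  intro k
  rw [hR]
  induction k with
  | zero => exact le_max_left _ _
  | succ k ih =>
    set M := max (‖x 0 - xstar‖ ^ 2) (2 * γb * σmax / a) with hMdef
    have ht0 : 0 ≤ a / c k := le_of_lt (div_pos ha0 (hckpos k))
    have ht1 : a / c k ≤ 1 := by
      rw [div_le_one (hckpos k)]
      linarith [hck1 k]
    have hr : 2 * γb * σmax / a ≤ M := le_max_right _ _
    have h1 := hstep k
    have h2 : (1 - a / c k) * ‖x k - xstar‖ ^ 2 ≤ (1 - a / c k) * M :=
      mul_le_mul_of_nonneg_left ih (by linarith)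
    have h3 : (a / c k) * (2 * γb * σmax / a) ≤ (a / c k) * M :=
      mul_le_mul_of_nonneg_left hr ht0
    calc ‖x (k+1) - xstar‖ ^ 2 ≤ (1 - a / c k) * ‖x k - xstar‖ ^ 2
        + (a / c k) * (2 * γb * σmax / a) := h1
    _ ≤ (1 - a / c k) * M + (a / c k) * M := by linarith
    _ = M := by ring
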